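/- For the Turán graph T_{n,r} with r dividing n: it has (1 − 1/r)n²/2 edges and n(n − n/r)(n − 2n/r)/6 triangles, and PI_w(T_{n,r}) = n²m − 9t²/m where m and t are its edge and triangle counts. -/

import Mathlib

open Finset
open scoped Classical

/-- Number of vertices strictly closer to `u` than to `v`. -/
noncomputable def ncl {V : Type*} [Fintype V] (G : SimpleGraph V) (u v : V) : ℕ :=
  (Finset.univ.filter fun x => G.dist x u < G.dist x v).card

/-- Weighted vertex PI index: each edge `uv` contributes
`(deg u + deg v) * (n_u(e) + n_v(e))`; each edge is counted twice in the double sum. -/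
noncomputable def PIw {V : Type*} [Fintype V] (G : SimpleGraph V) : ℝ :=
  (∑ u, ∑ v, if G.Adj u v then
    (((G.degree u + G.degree v : ℕ) : ℝ) * ((ncl G u v + ncl G v u : ℕ) : ℝ)) else 0) / 2

/-! With `n = r t`, `T_{n,r}` is isomorphic to the complete equipartite graph on `Fin r × Fin t`,
and the weighted PI index is an isomorphism invariant. That graph is `(r - 1) t`-regular, has
`C(r,2) t²` edges and `C(r,3) t³` triangles (three parts and one vertex in each), and for an edge
`uv` the vertices closer to `u` than to `v` are `u` itself and the `t - 1` other vertices of the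
part of `v`, so `n_u(e) = t`. Hence `PI_w = 4 (r - 1) t² m`, and the identity is algebra in `r`
and `t`. -/

open SimpleGraph

namespace SimpleGraph

section Invariance

variable {V W : Type*} {G : SimpleGraph V} {H : SimpleGraph W}

lemma Hom.edist_le (f : G →g H) (u v : V) : H.edist (f u) (f v) ≤ G.edist u v := by
  by_cases h : G.Reachable u v
  · obtain ⟨p, hp⟩ := h.exists_walk_length_eq_edist
    exact (SimpleGraph.edist_le (p.map f)).trans_eq (by rw [Walk.length_map, hp])
  · rw [edist_eq_top_of_not_reachable h]
    exact le_top

lemma Iso.edist_eq (e : G ≃g H) (u v : V) : H.edist (e u) (e v) = G.edist u v :=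
  le_antisymm (e.toHom.edist_le u v) (by simpa using e.symm.toHom.edist_le (e u) (e v))

lemma Iso.dist_eq (e : G ≃g H) (u v : V) : H.dist (e u) (e v) = G.dist u v := by
  rw [dist, dist, e.edist_eq]

lemma Embedding.isNClique_map (f : G ↪g H) {k : ℕ} {s : Finset V} (hs : G.IsNClique k s) :
    H.IsNClique k (s.map f.toEmbedding) := by
  refine ⟨?_, by rw [card_map, hs.card_eq]⟩
  rw [coe_map]
  rintro _ ⟨x, hx, rfl⟩ _ ⟨y, hy, rfl⟩ hne
  exact f.map_adj_iff.mpr (hs.isClique hx hy (ne_of_apply_ne _ hne))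

lemma Iso.card_cliqueFinset_eq [Fintype V] [Fintype W] [DecidableEq V] [DecidableEq W]
    [DecidableRel G.Adj] [DecidableRel H.Adj] (e : G ≃g H) (k : ℕ) :
    #(G.cliqueFinset k) = #(H.cliqueFinset k) := by
  refine card_nbij' (·.map e.toEmbedding.toEmbedding) (·.map e.symm.toEmbedding.toEmbedding)
    (fun s hs => ?_) (fun s hs => ?_) (fun s _ => by simp [Finset.map_map]) (fun s _ => by simp [Finset.map_map])
  · simp only [coe_cliqueFinset] at hs ⊢
    exact e.toEmbedding.isNClique_map hs
  · simp only [coe_cliqueFinset] at hs ⊢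
    exact e.symm.toEmbedding.isNClique_map hs

lemma Iso.ncl_eq [Fintype V] [Fintype W] (e : G ≃g H) (u v : V) :
    ncl H (e u) (e v) = ncl G u v := by
  rw [ncl, ← map_univ_equiv e.toEquiv, filter_map, card_map]
  simp [ncl, e.dist_eq]

lemma Iso.PIw_eq [Fintype V] [Fintype W] (e : G ≃g H) : PIw H = PIw G := by
  rw [PIw, PIw, ← e.toEquiv.sum_comp]
  congr 1
  refine sum_congr rfl fun u _ => ?_
  rw [← e.toEquiv.sum_comp]
  simp [e.ncl_eq, Iso.degree_eq, e.map_adj_iff]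

end Invariance

lemma PIw_eq_of_isRegularOfDegree {V : Type*} [Fintype V] {G : SimpleGraph V} {d c : ℕ}
    (hd : G.IsRegularOfDegree d) (hc : ∀ u v, G.Adj u v → ncl G u v = c) :
    PIw G = 4 * d * c * #G.edgeFinset := by
  have hrow : ∀ u, (∑ v, if G.Adj u v then
      (((G.degree u + G.degree v : ℕ) : ℝ) * ((ncl G u v + ncl G v u : ℕ) : ℝ)) else 0) =
      G.degree u * (4 * d * c) := by
    intro u
    calc _ = ∑ v ∈ G.neighborFinset u, (4 * d * c : ℝ) := by
          rw [neighborFinset_eq_filter, sum_filter]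
          refine sum_congr rfl fun v _ => ?_
          split_ifs with huv
          · rw [hd u, hd v, hc u v huv, hc v u huv.symm]
            push_cast
            ring
          · rfl
      _ = G.degree u * (4 * d * c) := by
          rw [sum_const, card_neighborFinset_eq_degree, nsmul_eq_mul]
  rw [PIw, sum_congr rfl fun u _ => hrow u, ← sum_mul, ← Nat.cast_sum,
    sum_degrees_eq_twice_card_edges]
  push_cast
  ring

end SimpleGraph

lemma Finset.card_filter_injOn_fst_image_eq {α β : Type*} [Fintype α] [Fintype β]
    [DecidableEq α] [DecidableEq β] (S : Finset α) :
    #{s : Finset (α × β) | Set.InjOn Prod.fst (s : Set (α × β)) ∧ s.image Prod.fst = S} =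
      Fintype.card β ^ #S := by
  rw [← Fintype.card_coe S, ← Fintype.card_fun, ← card_univ]
  symm
  -- such an `s` is the graph of a function `S → β`
  refine card_bij (fun g _ => univ.image fun a : S => (a.1, g a)) ?_ ?_ ?_
  · intro g _
    simp only [mem_filter, mem_univ, true_and]
    constructor
    · rintro _ hx _ hy h
      simp only [coe_image, coe_univ, Set.image_univ, Set.mem_range] at hx hy
      obtain ⟨a, rfl⟩ := hx
      obtain ⟨b, rfl⟩ := hy
      rw [Subtype.val_inj.mp h]
    · ext a
      simp
  · intro g₁ _ g₂ _ h
    funext a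
    have : (a.1, g₁ a) ∈ univ.image fun a : S => (a.1, g₂ a) :=
      h ▸ mem_image_of_mem _ (mem_univ a)
    simp only [mem_image, mem_univ, true_and, Prod.mk.injEq] at this
    obtain ⟨b, hb, hg⟩ := this
    obtain rfl := Subtype.val_inj.mp hb
    exact hg.symm
  · intro s hs
    simp only [mem_filter, mem_univ, true_and] at hs
    obtain ⟨hinj, hS⟩ := hs
    have hex : ∀ a : S, ∃ x ∈ s, x.1 = a.1 := fun a => by
      simpa [← hS] using a.2
    choose x hxs hx using hex
    refine ⟨fun a => (x a).2, mem_univ _, ?_⟩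
    ext y
    simp only [mem_image, mem_univ, true_and]
    constructor
    · rintro ⟨a, rfl⟩
      rw [← hx a]
      exact hxs a
    · intro hy
      have hyS : y.1 ∈ S := hS ▸ mem_image_of_mem _ hy
      refine ⟨⟨y.1, hyS⟩, ?_⟩
      have hxy : x ⟨y.1, hyS⟩ = y := hinj (hxs _) hy (hx _)
      exact Prod.ext rfl (by rw [hxy])

lemma Nat.cast_choose_three (K : Type*) [Field K] [CharZero K] (a : ℕ) :
    (a.choose 3 : K) = a * (a - 1) * (a - 2) / 6 := by
  rw [Nat.cast_choose_eq_descPochhammer_div]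
  simp [descPochhammer_succ_right, Nat.factorial]

namespace SimpleGraph

variable {r t : ℕ}

lemma dist_completeEquipartiteGraph_of_fst_eq (hr : 1 < r) {x y : Fin r × Fin t}
    (hne : x ≠ y) (hfst : x.1 = y.1) : (completeEquipartiteGraph r t).dist x y = 2 := by
  have : Nontrivial (Fin r) := Fin.nontrivial_iff_two_le.mpr hr
  obtain ⟨i, hi⟩ := exists_ne x.1
  have hedist : (completeEquipartiteGraph r t).edist x y = 2 := by
    refine edist_eq_two_iff.mpr ⟨hne, fun h => h hfst, (i, x.2), ?_⟩
    rw [mem_commonNeighbors]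
    exact ⟨Ne.symm hi, by rw [completeEquipartiteGraph_adj, ← hfst]; exact Ne.symm hi⟩
  rw [dist, hedist]
  rfl

lemma ncl_completeEquipartiteGraph {u v : Fin r × Fin t}
    (huv : (completeEquipartiteGraph r t).Adj u v) :
    ncl (completeEquipartiteGraph r t) u v = t := by
  have hr : 1 < r := Fin.nontrivial_iff_two_le.mp ⟨u.1, v.1, huv⟩
  have hdist : ∀ x y, (completeEquipartiteGraph r t).dist x y =
      if x = y then 0 else if x.1 = y.1 then 2 else 1 := by
    intro x y
    split_ifs with h h'
    · rw [h, dist_self]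
    · exact dist_completeEquipartiteGraph_of_fst_eq hr h h'
    · exact dist_eq_one_iff_adj.mpr h'
  have hcloser : univ.filter (fun x => (completeEquipartiteGraph r t).dist x u <
      (completeEquipartiteGraph r t).dist x v) = insert u (({v.1} ×ˢ univ).erase v) := by
    ext x
    simp only [hdist, mem_filter, mem_univ, true_and, mem_insert, mem_erase, mem_product,
      mem_singleton]
    have : u.1 ≠ v.1 := huv
    split_ifs <;> grind
  have hu : u ∉ (({v.1} : Finset (Fin r)) ×ˢ (univ : Finset (Fin t))).erase v := by
    rw [mem_erase, mem_product, mem_singleton]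
    exact fun h => huv h.2.1
  have ht : 0 < t := v.2.pos
  rw [ncl, hcloser, card_insert_of_notMem hu, card_erase_of_mem (by simp), card_product,
    card_singleton, card_univ, Fintype.card_fin, one_mul]
  omega

lemma isNClique_completeEquipartiteGraph_iff {k : ℕ} {s : Finset (Fin r × Fin t)} :
    (completeEquipartiteGraph r t).IsNClique k s ↔
      Set.InjOn Prod.fst (s : Set (Fin r × Fin t)) ∧ #s = k := by
  rw [isNClique_iff, IsClique, Set.injOn_iff_pairwise_ne]
  rfl

theorem card_cliqueFinset_completeEquipartiteGraph (k : ℕ) :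
    #((completeEquipartiteGraph r t).cliqueFinset k) = r.choose k * t ^ k := by
  have hmaps : ∀ s ∈ (completeEquipartiteGraph r t).cliqueFinset k,
      s.image Prod.fst ∈ powersetCard k (univ : Finset (Fin r)) := by
    intro s hs
    rw [mem_cliqueFinset_iff, isNClique_completeEquipartiteGraph_iff] at hs
    rw [mem_powersetCard, card_image_of_injOn hs.1]
    exact ⟨subset_univ _, hs.2⟩
  have hfiber : ∀ S ∈ powersetCard k (univ : Finset (Fin r)),
      #{s ∈ (completeEquipartiteGraph r t).cliqueFinset k | s.image Prod.fst = S} = t ^ k := by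
    intro S hS
    rw [mem_powersetCard] at hS
    calc _ = #{s : Finset (Fin r × Fin t) |
            Set.InjOn Prod.fst (s : Set (Fin r × Fin t)) ∧ s.image Prod.fst = S} := by
          congr 1
          ext s
          simp only [mem_filter, mem_cliqueFinset_iff, isNClique_completeEquipartiteGraph_iff,
            mem_univ, true_and]
          constructor
          · exact fun ⟨⟨hinj, _⟩, hS'⟩ => ⟨hinj, hS'⟩
          · rintro ⟨hinj, rfl⟩
            exact ⟨⟨hinj, by rw [← hS.2, card_image_of_injOn hinj]⟩, rfl⟩
      _ = t ^ k := by rw [card_filter_injOn_fst_image_eq, Fintype.card_fin, hS.2]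
  rw [card_eq_sum_card_fiberwise hmaps, sum_congr rfl hfiber, sum_const, card_powersetCard,
    card_univ, Fintype.card_fin, smul_eq_mul]

end SimpleGraph

theorem PIw_turanGraph (n r : ℕ) (hr : 0 < r) (hdvd : r ∣ n) :
    ((SimpleGraph.turanGraph n r).edgeFinset.card : ℝ) =
      (1 - 1 / (r : ℝ)) * (n : ℝ) ^ 2 / 2 ∧
    (((SimpleGraph.turanGraph n r).cliqueFinset 3).card : ℝ) =
      (n : ℝ) * ((n : ℝ) - (n : ℝ) / (r : ℝ)) * ((n : ℝ) - 2 * (n : ℝ) / (r : ℝ)) / 6 ∧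
    PIw (SimpleGraph.turanGraph n r) =
      (n : ℝ) ^ 2 * ((SimpleGraph.turanGraph n r).edgeFinset.card : ℝ) -
      9 * (((SimpleGraph.turanGraph n r).cliqueFinset 3).card : ℝ) ^ 2 /
        ((SimpleGraph.turanGraph n r).edgeFinset.card : ℝ) := by
  obtain ⟨t, rfl⟩ := hdvd
  have e : completeEquipartiteGraph r t ≃g turanGraph (r * t) r :=
    completeEquipartiteGraph.turanGraph
  have hm : #(turanGraph (r * t) r).edgeFinset = r.choose 2 * t ^ 2 := by
    rw [← e.card_edgeFinset_eq, card_edgeFinset_completeEquipartiteGraph]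
  have htri : #((turanGraph (r * t) r).cliqueFinset 3) = r.choose 3 * t ^ 3 := by
    rw [← e.card_cliqueFinset_eq, card_cliqueFinset_completeEquipartiteGraph]
  have hPI : PIw (turanGraph (r * t) r) =
      4 * ((r - 1) * t : ℕ) * t * (r.choose 2 * t ^ 2 : ℕ) := by
    rw [e.PIw_eq, PIw_eq_of_isRegularOfDegree
      (fun v => by convert degree_completeEquipartiteGraph v)
      (fun u v => ncl_completeEquipartiteGraph)]
    congr 2
    convert card_edgeFinset_completeEquipartiteGraph
  rw [hPI, hm, htri]
  have hr0 : (r : ℝ) ≠ 0 := by positivity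
  push_cast [Nat.cast_choose_two, Nat.cast_choose_three, Nat.cast_sub hr]
  refine ⟨by field_simp, by field_simp, ?_⟩
  rcases eq_or_ne ((r : ℝ) * (r - 1) / 2 * t ^ 2) 0 with hm0 | hm0
  · -- no edges: `9 t² / m` is the junk value `0`
    simp [hm0]
  · field_simp
    ring
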